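/- arXiv:1307.8299 — 6 statements merged into one kernel-verified Lean document; each statement's English description precedes it below -/
import Mathlib

section
/- Let F_int : ℕ → ℕ and F_ext : ℕ → ℕ be finitely supported functions such that F_int(k) = 0 whenever k is odd or k < 2, and let L, R, D₂, D₃ be natural numbers. Assume: (i) 3·L = Σ_k k·F_int(k) + Σ_k k·F_ext(k); (ii) F_int(2) = D₂ + 3·D₃; (iii) 3·R ≥ 3·D₂ + 6·D₃ + Σ_{k≥4} F_int(k); (iv) Σ_k k·F_ext(k) ≥ 1. Then the divergence degree ω := -2·L + 3·(Σ_k F_int(k) - R), viewed as an integer, satisfies ω < 0. -/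
/-- Finiteness of open graph amplitudes in the rank-3 Abelian colored
Boulatov model over `U(1)³` (`dim G = 3`): the divergence degree
`ω = -2L + 3(F_int − R)` of any open (`Σ k·F_ext(k) ≥ 1`) face-connected
graph is strictly negative. -/
theorem divergence_degree_neg_open_rank3
    (F_int F_ext : ℕ →₀ ℕ)
    (hvan : ∀ k : ℕ, (Odd k ∨ k < 2) → F_int k = 0)
    (L R D₂ D₃ : ℕ)
    (h1 : 3 * L = ∑ k ∈ F_int.support, k * F_int k
            + ∑ k ∈ F_ext.support, k * F_ext k)
    (h2 : F_int 2 = D₂ + 3 * D₃)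
    (h3 : 3 * R ≥ 3 * D₂ + 6 * D₃
            + ∑ k ∈ F_int.support.filter (fun k => 4 ≤ k), F_int k)
    (h4 : 1 ≤ ∑ k ∈ F_ext.support, k * F_ext k) :
    (-2 * (L : ℤ) + 3 * ((∑ k ∈ F_int.support, (F_int k : ℤ)) - (R : ℤ))) < 0 := by
  set s := F_int.support with hs
  -- every support element not ≥ 4 is exactly 2
  have key : ∀ k ∈ s.filter (fun k => ¬ 4 ≤ k), k = 2 := by
    intro k hk
    obtain ⟨hks, h4k⟩ := Finset.mem_filter.mp hk
    have hF : F_int k ≠ 0 := Finsupp.mem_support_iff.mp hks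
    have hno : ¬ (Odd k ∨ k < 2) := fun h => hF (hvan k h)
    push_neg at hno
    obtain ⟨hodd, h2k⟩ := hno
    rw [Nat.not_odd_iff_even] at hodd
    obtain ⟨r, hr⟩ := hodd
    omega
  have hsub : s.filter (fun k => ¬ 4 ≤ k) ⊆ {2} := by
    intro k hk; simp [key k hk]
  have hmiss : ∀ f : ℕ → ℕ, (∀ x, F_int x = 0 → f x = 0) →
      ∑ k ∈ s.filter (fun k => ¬ 4 ≤ k), f k = f 2 := by
    intro f hf
    rw [Finset.sum_subset hsub]
    · simp
    · intro x hx hxn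
      have hx2 : x = 2 := by simpa using hx
      subst hx2
      apply hf
      by_contra h0
      exact hxn (Finset.mem_filter.mpr ⟨Finsupp.mem_support_iff.mpr h0, by norm_num⟩)
  have hA2 : ∑ k ∈ s.filter (fun k => ¬ 4 ≤ k), F_int k = F_int 2 :=
    hmiss (fun k => F_int k) (fun x h => h)
  have hW2 : ∑ k ∈ s.filter (fun k => ¬ 4 ≤ k), k * F_int k = 2 * F_int 2 :=
    hmiss (fun k => k * F_int k) (fun x h => by simp [h])
  set A := ∑ k ∈ s.filter (fun k => 4 ≤ k), F_int k with hA
  set B := ∑ k ∈ s.filter (fun k => 4 ≤ k), k * F_int k with hB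
  have hF : ∑ k ∈ s, F_int k = A + F_int 2 := by
    rw [← Finset.sum_filter_add_sum_filter_not s (fun k => 4 ≤ k), hA2]
  have hWt : ∑ k ∈ s, k * F_int k = B + 2 * F_int 2 := by
    rw [← Finset.sum_filter_add_sum_filter_not s (fun k => 4 ≤ k), hW2]
  have hBA : 4 * A ≤ B := by
    rw [hA, hB, Finset.mul_sum]
    refine Finset.sum_le_sum fun k hk => ?_
    exact Nat.mul_le_mul_right (F_int k) (Finset.mem_filter.mp hk).2
  -- main natural-number inequality
  have hmain : 9 * (∑ k ∈ s, F_int k) + 1 ≤ 6 * L + 9 * R := by omega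
  have hcast : ((∑ k ∈ s, F_int k : ℕ) : ℤ) = ∑ k ∈ s, (F_int k : ℤ) := by
    push_cast; ring
  have : (9 : ℤ) * (∑ k ∈ s, (F_int k : ℤ)) + 1 ≤ 6 * L + 9 * R := by
    rw [← hcast]; exact_mod_cast hmain
  linarith
end

section
/- Let F_int : ℕ → ℕ and F_ext : ℕ → ℕ be finitely supported functions such that F_int(k) = 0 whenever k is odd or k < 2, and let L, R, D₂, D₃ be natural numbers. Assume: (i) 3·L = Σ_k k·F_int(k) + Σ_k k·F_ext(k); (ii) F_int(2) = D₂ + 3·D₃; (iii) 3·R ≥ 3·D₂ + 6·D₃ + Σ_{k≥4} F_int(k). Then the divergence degree ω := -2·L + 3·(Σ_k F_int(k) - R) satisfies 3·ω ≤ -Σ_{k≥6} (2k - 9)·F_int(k) - 2·Σ_k k·F_ext(k) - 4·D₂ - 3·D₃ - 2·F_int(4) (as integers). -/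
/-!
Since `F_int` lives on even `k ≥ 2`, every sum over `k` splits into the terms at `k = 2`,
`k = 4` and a tail over `k ≥ 6`. After this split, (i)–(iii) and the claim are linear
in `F_int 2`, `F_int 4`, `D₂`, `D₃`, the open-face sum and the two tail sums
`Σ_{k≥6} k F_int(k)` and `Σ_{k≥6} F_int(k)`, and the claim follows from them with slack
`3 Σ_{k≥6} F_int(k) ≥ 0`.
-/

namespace Finsupp

variable {N M : Type*} [Zero N] [AddCommMonoid M]

theorem sum_support_eq_sum_filter_le {F : ℕ →₀ N} {n : ℕ} (hF : ∀ k < n, F k = 0)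
    (f : ℕ → N → M) :
    ∑ k ∈ F.support, f k (F k) = ∑ k ∈ F.support.filter (n ≤ ·), f k (F k) := by
  refine (Finset.sum_filter_of_ne fun k hk _ => ?_).symm
  by_contra hlt
  exact mem_support_iff.mp hk (hF k (not_le.mp hlt))

theorem sum_filter_le_eq_add_sum_filter_add_two_le {F : ℕ →₀ N} {n : ℕ}
    (hsucc : F (n + 1) = 0) (f : ℕ → N → M) (hf : ∀ k, f k 0 = 0) :
    ∑ k ∈ F.support.filter (n ≤ ·), f k (F k)
      = f n (F n) + ∑ k ∈ F.support.filter (n + 2 ≤ ·), f k (F k) := by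
  rw [← Finset.sum_filter_add_sum_filter_not _ (n + 2 ≤ ·), Finset.filter_filter, add_comm]
  have hhead : (F.support.filter (n ≤ ·)).filter (¬ n + 2 ≤ ·) ⊆ {n, n + 1} := by
    intro k hk
    simp only [Finset.mem_filter, Finset.mem_insert, Finset.mem_singleton] at hk ⊢
    omega
  have hhead_sum : ∑ k ∈ (F.support.filter (n ≤ ·)).filter (¬ n + 2 ≤ ·), f k (F k)
      = f n (F n) := by
    rw [Finset.sum_subset hhead fun k hk hk' => ?_, Finset.sum_pair (by omega), hsucc, hf,
      add_zero]
    have hk0 : F k = 0 := by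
      by_contra hne
      simp only [Finset.mem_insert, Finset.mem_singleton] at hk
      exact hk' (Finset.mem_filter.mpr
        ⟨Finset.mem_filter.mpr ⟨mem_support_iff.mpr hne, by omega⟩, by omega⟩)
    rw [hk0, hf]
  rw [hhead_sum]
  congr 1
  exact Finset.sum_congr (Finset.filter_congr fun k _ => by omega) fun _ _ => rfl

theorem sum_support_eq_add_add_sum_filter_six_le {F : ℕ →₀ N}
    (hF : ∀ k, (Odd k ∨ k < 2) → F k = 0) (f : ℕ → N → M) (hf : ∀ k, f k 0 = 0) :
    ∑ k ∈ F.support, f k (F k)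
      = f 2 (F 2) + (f 4 (F 4) + ∑ k ∈ F.support.filter (6 ≤ ·), f k (F k)) := by
  rw [sum_support_eq_sum_filter_le fun k hk => hF k (Or.inr hk),
    sum_filter_le_eq_add_sum_filter_add_two_le (hF 3 (Or.inl ⟨1, rfl⟩)) f hf,
    sum_filter_le_eq_add_sum_filter_add_two_le (hF 5 (Or.inl ⟨2, rfl⟩)) f hf]

end Finsupp

open Finsupp in
/-- Key quantitative power-counting bound for the rank-3 Abelian colored
Boulatov model:
`3ω ≤ −Σ_{k≥6}(2k−9)F_int(k) − 2Σ_k k·F_ext(k) − 4D₂ − 3D₃ − 2F_int(4)`. -/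
theorem divergence_degree_bound_rank3
    (F_int F_ext : ℕ →₀ ℕ)
    (hvan : ∀ k : ℕ, (Odd k ∨ k < 2) → F_int k = 0)
    (L R D₂ D₃ : ℕ)
    (h1 : 3 * L = ∑ k ∈ F_int.support, k * F_int k
            + ∑ k ∈ F_ext.support, k * F_ext k)
    (h2 : F_int 2 = D₂ + 3 * D₃)
    (h3 : 3 * R ≥ 3 * D₂ + 6 * D₃
            + ∑ k ∈ F_int.support.filter (fun k => 4 ≤ k), F_int k) :
    3 * (-2 * (L : ℤ) + 3 * ((∑ k ∈ F_int.support, (F_int k : ℤ)) - (R : ℤ)))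
      ≤ -(∑ k ∈ F_int.support.filter (fun k => 6 ≤ k), (2 * (k : ℤ) - 9) * F_int k)
        - 2 * ∑ k ∈ F_ext.support, (k : ℤ) * F_ext k
        - 4 * (D₂ : ℤ) - 3 * (D₃ : ℤ) - 2 * (F_int 4 : ℤ) := by
  rw [sum_support_eq_add_add_sum_filter_six_le hvan (fun k n => k * n) fun _ => mul_zero _] at h1
  rw [sum_filter_le_eq_add_sum_filter_add_two_le (hvan 5 (Or.inl ⟨2, rfl⟩)) (fun _ n => n)
    fun _ => rfl] at h3
  rw [sum_support_eq_add_add_sum_filter_six_le hvan (fun _ n => (n : ℤ)) fun _ => Nat.cast_zero]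
  have hweight : ∑ k ∈ F_int.support.filter (6 ≤ ·), (2 * (k : ℤ) - 9) * F_int k
      = 2 * ∑ k ∈ F_int.support.filter (6 ≤ ·), (k : ℤ) * F_int k
        - 9 * ∑ k ∈ F_int.support.filter (6 ≤ ·), (F_int k : ℤ) := by
    simp only [sub_mul, mul_assoc, Finset.sum_sub_distrib, ← Finset.mul_sum]
  have hcount : 0 ≤ ∑ k ∈ F_int.support.filter (6 ≤ ·), (F_int k : ℤ) :=
    Finset.sum_nonneg fun _ _ => Int.natCast_nonneg _
  replace h1 := congrArg (Nat.cast : ℕ → ℤ) h1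
  replace h2 := congrArg (Nat.cast : ℕ → ℤ) h2
  replace h3 := Nat.cast_le (α := ℤ) |>.mpr h3
  push_cast at h1 h2 h3
  rw [hweight]
  linarith
end

section
/- Let d and D be natural numbers with d ≥ 3, D ≥ 1, D·(d-1) ≤ 8 and D·d·(d-2) ≤ 8. Let F_int : ℕ → ℕ and F_ext : ℕ → ℕ be finitely supported functions with F_int(k) = 0 whenever k is odd or k < 2, let L, R be natural numbers and D₂, ..., D_d natural numbers. Assume: (i) d·L = Σ_k k·F_int(k) + Σ_k k·F_ext(k); (ii) 2·F_int(2) = Σ_{k=2}^{d} k·(k-1)·D_k; (iii) d·R ≥ d·Σ_{k=2}^{d} (k-1)·D_k + Σ_{k≥4} F_int(k); (iv) Σ_k k·F_ext(k) ≥ 1. Then the divergence degree ω := -2·L + D·(Σ_k F_int(k) - R) satisfies ω < 0. -/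
private lemma arith_key (dz Dz Lz Rz F2 S4 T4 E P Q : ℤ)
    (hAz : dz * Lz = 2 * F2 + T4 + E)
    (hBz : 2 * F2 = Q)
    (hCz : dz * P + S4 ≤ dz * Rz)
    (hTz : 4 * S4 ≤ T4)
    (hQz : Dz * dz * Q ≤ 2 * (Dz * dz * P) + 4 * Q)
    (hEz : 1 ≤ E)
    (hd1z : Dz * (dz - 1) ≤ 8)
    (hDz : 1 ≤ Dz) (hdz : 3 ≤ dz) (hS4nn : 0 ≤ S4) :
    -2 * Lz + Dz * ((S4 + F2) - Rz) < 0 := by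
  have hCD : Dz * (dz * P + S4) ≤ Dz * (dz * Rz) :=
    mul_le_mul_of_nonneg_left hCz (by linarith)
  have hDS : Dz * (dz - 1) * S4 ≤ 8 * S4 :=
    mul_le_mul_of_nonneg_right hd1z hS4nn
  set w : ℤ := -2 * Lz + Dz * ((S4 + F2) - Rz) with hw
  have key : 2 * dz * w ≤ -4 := by
    have expand : 2 * dz * w
        = -4 * (dz * Lz) + Dz * dz * (2 * F2)
          + 2 * (Dz * dz * S4) - 2 * (Dz * (dz * Rz)) := by
      rw [hw]; ring
    rw [expand, hAz, hBz]
    nlinarith [hCD, hDS, hQz, hTz, hEz]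
  by_contra hcon
  push_neg at hcon
  have hnn : (0 : ℤ) ≤ 2 * dz * w := mul_nonneg (by linarith) hcon
  linarith

/-- General convergence criterion for open graphs in rank-`d` Abelian colored
Boulatov–Ooguri models over `U(1)^D` with Laplacian kinetic term: under
`d ≥ 3`, `D ≥ 1`, `D(d−1) ≤ 8` and `Dd(d−2) ≤ 8`, every open
(`Σ k·F_ext(k) ≥ 1`) face-connected graph has strictly negative divergence
degree `ω = −2L + D(F_int − R)`. -/
theorem divergence_degree_neg_open_rank_d
    (d D : ℕ) (hd : 3 ≤ d) (hD : 1 ≤ D)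
    (hc1 : D * (d - 1) ≤ 8) (hc2 : D * d * (d - 2) ≤ 8)
    (F_int F_ext : ℕ →₀ ℕ)
    (hvan : ∀ k : ℕ, (Odd k ∨ k < 2) → F_int k = 0)
    (L R : ℕ) (Dp : ℕ → ℕ)
    (h1 : d * L = ∑ k ∈ F_int.support, k * F_int k
            + ∑ k ∈ F_ext.support, k * F_ext k)
    (h2 : 2 * F_int 2 = ∑ k ∈ Finset.Icc 2 d, k * (k - 1) * Dp k)
    (h3 : d * R ≥ d * (∑ k ∈ Finset.Icc 2 d, (k - 1) * Dp k)
            + ∑ k ∈ F_int.support.filter (fun k => 4 ≤ k), F_int k)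
    (h4 : 1 ≤ ∑ k ∈ F_ext.support, k * F_ext k) :
    (-2 * (L : ℤ) + (D : ℤ) * ((∑ k ∈ F_int.support, (F_int k : ℤ)) - (R : ℤ))) < 0 := by
  classical
  set s : Finset ℕ := F_int.support with hs
  set s4 : Finset ℕ := s.filter (fun k => 4 ≤ k) with hs4
  set s2 : Finset ℕ := s.filter (fun k => ¬ 4 ≤ k) with hs2
  -- every element of s2 equals 2
  have hmem2 : ∀ k ∈ s2, k = 2 := by
    intro k hk
    rw [hs2, Finset.mem_filter] at hk
    obtain ⟨hks, hklt⟩ := hk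
    rw [hs, Finsupp.mem_support_iff] at hks
    have hnot : ¬ (Odd k ∨ k < 2) := fun h => hks (hvan k h)
    push_neg at hnot
    obtain ⟨hodd, hge⟩ := hnot
    rw [Nat.odd_iff] at hodd
    omega
  have hsub2 : s2 ⊆ ({2} : Finset ℕ) := by
    intro k hk; simp [hmem2 k hk]
  have h2notin : 2 ∉ s2 → F_int 2 = 0 := by
    intro h
    by_contra hne
    exact h (by
      rw [hs2, Finset.mem_filter]
      exact ⟨by rw [hs, Finsupp.mem_support_iff]; exact hne, by omega⟩)
  -- sums over s2
  have e2f : ∑ k ∈ s2, F_int k = F_int 2 := by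
    rw [Finset.sum_subset hsub2 (by
      intro x hx hxn
      simp only [Finset.mem_singleton] at hx
      subst hx
      exact h2notin hxn)]
    simp
  have e2g : ∑ k ∈ s2, k * F_int k = 2 * F_int 2 := by
    rw [Finset.sum_subset hsub2 (by
      intro x hx hxn
      simp only [Finset.mem_singleton] at hx
      subst hx
      rw [h2notin hxn]; ring)]
    simp
  -- split sums over s
  have esplitf : ∑ k ∈ s, F_int k = (∑ k ∈ s4, F_int k) + F_int 2 := by
    rw [← e2f, ← Finset.sum_filter_add_sum_filter_not s (fun k => 4 ≤ k)]
  have esplitg : ∑ k ∈ s, k * F_int k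
      = (∑ k ∈ s4, k * F_int k) + 2 * F_int 2 := by
    rw [← e2g, ← Finset.sum_filter_add_sum_filter_not s (fun k => 4 ≤ k)]
  set S4 : ℕ := ∑ k ∈ s4, F_int k with hS4
  set T4 : ℕ := ∑ k ∈ s4, k * F_int k with hT4
  set E : ℕ := ∑ k ∈ F_ext.support, k * F_ext k with hE
  set P : ℕ := ∑ k ∈ Finset.Icc 2 d, (k - 1) * Dp k with hP
  set Q : ℕ := ∑ k ∈ Finset.Icc 2 d, k * (k - 1) * Dp k with hQ
  -- T4 ≥ 4 * S4
  have hT : 4 * S4 ≤ T4 := by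
    rw [hS4, hT4, Finset.mul_sum]
    apply Finset.sum_le_sum
    intro k hk
    rw [hs4, Finset.mem_filter] at hk
    exact Nat.mul_le_mul_right _ hk.2
  -- key dipole inequality: D*d*Q ≤ 2*(D*d*P) + 4*Q
  have hQb : D * d * Q ≤ 2 * (D * d * P) + 4 * Q := by
    rw [hP, hQ]
    simp only [Finset.mul_sum]
    rw [← Finset.sum_add_distrib]
    apply Finset.sum_le_sum
    intro k hk
    rw [Finset.mem_Icc] at hk
    obtain ⟨hk2, hkd⟩ := hk
    obtain ⟨m, rfl⟩ : ∃ m, k = m + 2 := ⟨k - 2, by omega⟩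
    have hm1 : m + 2 - 1 = m + 1 := by omega
    rw [hm1]
    have h8 : D * d * m ≤ 8 := by
      calc D * d * m ≤ D * d * (d - 2) := Nat.mul_le_mul_left _ (by omega)
        _ ≤ 8 := hc2
    nlinarith [Nat.mul_le_mul_right ((m + 1) * Dp (m + 2)) h8,
      Nat.zero_le ((m + 1) * Dp (m + 2)), Nat.zero_le (Dp (m + 2))]
  -- basic identities in ℕ
  have hA : d * L = 2 * F_int 2 + T4 + E := by
    rw [h1, esplitg]; ring
  have hC : d * P + S4 ≤ d * R := h3
  -- cast everything to ℤ
  have hAz : (d : ℤ) * L = 2 * (F_int 2 : ℤ) + (T4 : ℤ) + (E : ℤ) := by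
    exact_mod_cast congrArg (Nat.cast : ℕ → ℤ) hA
  have hBz : 2 * (F_int 2 : ℤ) = (Q : ℤ) := by exact_mod_cast congrArg (Nat.cast : ℕ → ℤ) h2
  have hCz : (d : ℤ) * P + (S4 : ℤ) ≤ (d : ℤ) * R := by exact_mod_cast hC
  have hTz : 4 * (S4 : ℤ) ≤ (T4 : ℤ) := by exact_mod_cast hT
  have hQz : (D : ℤ) * d * Q ≤ 2 * ((D : ℤ) * d * P) + 4 * (Q : ℤ) := by exact_mod_cast hQb
  have hEz : (1 : ℤ) ≤ (E : ℤ) := by exact_mod_cast h4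
  have hSz : (∑ k ∈ s, (F_int k : ℤ)) = (S4 : ℤ) + (F_int 2 : ℤ) := by
    have h := congrArg (Nat.cast : ℕ → ℤ) esplitf
    push_cast at h
    exact h
  have hd1z : (D : ℤ) * ((d : ℤ) - 1) ≤ 8 := by
    have : ((D * (d - 1) : ℕ) : ℤ) ≤ 8 := by exact_mod_cast hc1
    have hdd : ((d - 1 : ℕ) : ℤ) = (d : ℤ) - 1 := by
      have : 1 ≤ d := by omega
      push_cast [this]; ring
    push_cast at this
    rw [hdd] at this
    exact this
  have hDz : (1 : ℤ) ≤ (D : ℤ) := by exact_mod_cast hD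
  have hdz : (3 : ℤ) ≤ (d : ℤ) := by exact_mod_cast hd
  have hS4nn : (0 : ℤ) ≤ (S4 : ℤ) := by positivity
  -- multiply hCz by D
  have hCD : (D : ℤ) * ((d : ℤ) * P + (S4 : ℤ)) ≤ (D : ℤ) * ((d : ℤ) * R) :=
    mul_le_mul_of_nonneg_left hCz (by positivity)
  -- multiply hd1z by S4
  have hDS : (D : ℤ) * ((d : ℤ) - 1) * (S4 : ℤ) ≤ 8 * (S4 : ℤ) :=
    mul_le_mul_of_nonneg_right hd1z hS4nn
  rw [hSz]
  exact arith_key d D L R (F_int 2) S4 T4 E P Q hAz hBz hCz hTz hQz hEz hd1z hDz hdz hS4nn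
end

section
/- Let K be a field, let m, n, d be natural numbers with d ≥ 1, and let A be an m × n matrix over K such that no row of A is zero and every column of A has at most d nonzero entries. Then m ≤ d · rank(A). -/
/-!
Greedy elimination: pick a nonzero row `v i₀` and a column `j` with `v i₀ j ≠ 0`. Then `v i₀` lies
outside the span of the rows vanishing at `j`, so discarding the at most `d` rows that do not
vanish at `j` lowers the dimension of the row span by at least one.
-/

open Module Submodule Finset

section

variable {K ι κ : Type*} [Field K] [DecidableEq K] {v : ι → κ → K}

lemma finrank_span_filter_apply_eq_zero_lt {s : Finset ι} {i₀ : ι} (hi₀ : i₀ ∈ s) {j : κ}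
    (hj : v i₀ j ≠ 0) :
    finrank K (span K (v '' s.filter (v · j = 0))) < finrank K (span K (v '' s)) := by
  have := FiniteDimensional.span_of_finite K (s.finite_toSet.image v)
  apply Submodule.finrank_lt_finrank_of_lt
  refine lt_of_le_of_ne (span_mono (Set.image_mono (coe_subset.mpr (filter_subset _ _))))
    fun heq => hj ?_
  have hker : span K (v '' s.filter (v · j = 0)) ≤ LinearMap.ker (LinearMap.proj j) := by
    rw [span_le]
    rintro _ ⟨i, hi, rfl⟩
    exact (mem_filter.mp hi).2
  exact hker (heq ▸ subset_span ⟨i₀, hi₀, rfl⟩)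

theorem card_le_mul_finrank_span {d : ℕ} (s : Finset ι)
    (hrow : ∀ i ∈ s, v i ≠ 0) (hcol : ∀ j, #(s.filter (v · j ≠ 0)) ≤ d) :
    #s ≤ d * finrank K (span K (v '' s)) := by
  induction s using Finset.strongInduction with
  | H s ih =>
    obtain rfl | ⟨i₀, hi₀⟩ := s.eq_empty_or_nonempty
    · simp
    obtain ⟨j, hj⟩ : ∃ j, v i₀ j ≠ 0 := Function.ne_iff.mp (hrow i₀ hi₀)
    have hsub : s.filter (v · j = 0) ⊂ s := filter_ssubset.mpr ⟨i₀, hi₀, hj⟩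
    have hvanishing := ih _ hsub (fun i hi => hrow i (hsub.subset hi))
      fun j' => (card_le_card (filter_subset_filter _ hsub.subset)).trans (hcol j')
    have hrank := finrank_span_filter_apply_eq_zero_lt hi₀ hj
    calc #s = #(s.filter (v · j = 0)) + #(s.filter (v · j ≠ 0)) :=
          (card_filter_add_card_filter_not _).symm
      _ ≤ d * finrank K (span K (v '' s.filter (v · j = 0))) + d := add_le_add hvanishing (hcol j)
      _ = d * (finrank K (span K (v '' s.filter (v · j = 0))) + 1) := by ring
      _ ≤ d * finrank K (span K (v '' s)) := Nat.mul_le_mul_left d hrank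

end

theorem row_count_le_mul_rank_general
    {K : Type*} [Field K] (m n d : ℕ)
    (A : Matrix (Fin m) (Fin n) K)
    (hrow : ∀ i : Fin m, A i ≠ 0)
    (hcol : ∀ j : Fin n, {i : Fin m | A i j ≠ 0}.ncard ≤ d) :
    m ≤ d * A.rank := by
  classical
  have h := card_le_mul_finrank_span (v := A.row) univ (fun i _ => hrow i) fun j => by
    rw [← Set.ncard_coe_finset, coe_filter_univ]; exact hcol j
  rwa [coe_univ, Set.image_univ, card_univ, Fintype.card_fin,
    ← Matrix.rank_eq_finrank_span_row] at h

/-- Linear-algebraic core of the rank lower bound for the line–face incidence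
matrix of a stranded graph: if no row of an `m × n` matrix over a field is
zero and every column has at most `d ≥ 1` nonzero entries, then
`m ≤ d · rank(A)`. -/
theorem row_count_le_mul_rank
    {K : Type*} [Field K] (m n d : ℕ) (hd : 1 ≤ d)
    (A : Matrix (Fin m) (Fin n) K)
    (hrow : ∀ i : Fin m, A i ≠ 0)
    (hcol : ∀ j : Fin n, {i : Fin m | A i j ≠ 0}.ncard ≤ d) :
    m ≤ d * A.rank :=
  row_count_le_mul_rank_general m n d A hrow hcol
end

section
/- Let K be a field and let A be a matrix over K whose row index set is partitioned into F₁ ⊔ F₂ and whose column index set is partitioned into L₁ ⊔ L₂, such that the block A[F₁, L₂] is zero. Suppose moreover that in the block A[F₂, L₂] no row is zero and every column has at most d nonzero entries, where d ≥ 1. Then rank(A) ≥ rank(A[F₁, L₁]) + |F₂| / d. -/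
open Module Submodule

set_option synthInstance.maxHeartbeats 80000

/-- Counting lemma: if no row of `B` vanishes and each column has at most `d`
nonzero entries, then `|F₂| ≤ d * dim (column span of B)`. -/
lemma card_le_mul_finrank_span_cols
    {K : Type*} [Field K] {F₂ L₂ : Type*} [Fintype F₂] [Fintype L₂]
    (d : ℕ) (B : Matrix F₂ L₂ K)
    (hrow : ∀ i : F₂, (fun j : L₂ => B i j) ≠ 0)
    (hcol : ∀ j : L₂, {i : F₂ | B i j ≠ 0}.ncard ≤ d) :
    Fintype.card F₂ ≤ d * finrank K (span K (Set.range fun j i => B i j)) := by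
  classical
  set cols : L₂ → (F₂ → K) := fun j i => B i j with hcols
  obtain ⟨s, hsub, hspan, hli⟩ := exists_linearIndependent K (Set.range cols)
  haveI : Fintype s := ((Set.finite_range cols).subset hsub).fintype
  have hcard : finrank K (span K (Set.range cols)) = s.toFinset.card := by
    rw [← hspan]; exact finrank_span_set_eq_card hli
  -- every row has a nonzero entry in some vector of `s`
  have hpick : ∀ i : F₂, ∃ v ∈ s, v i ≠ 0 := by
    intro i
    by_contra h
    push_neg at h
    have hker : span K s ≤ LinearMap.ker (LinearMap.proj (R := K) (φ := fun _ : F₂ => K) i) := by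
      rw [span_le]
      intro v hv
      simpa using h v hv
    have : ∀ j : L₂, B i j = 0 := by
      intro j
      have hm : cols j ∈ span K s := by
        rw [hspan]; exact subset_span (Set.mem_range_self j)
      simpa [cols] using hker hm
    exact hrow i (funext this)
  choose f hf1 hf2 using hpick
  have hmain : (Finset.univ : Finset F₂).card ≤ d * (Finset.univ.image f).card := by
    apply Finset.card_le_mul_card_image
    intro a ha
    obtain ⟨i₀, _, hfi₀⟩ := Finset.mem_image.mp ha
    obtain ⟨j, hj⟩ := hsub (hfi₀ ▸ hf1 i₀)
    calc (Finset.univ.filter fun i => f i = a).card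
        = ((Finset.univ.filter fun i => f i = a : Finset F₂) : Set F₂).ncard := by
          rw [Set.ncard_coe_finset]
      _ ≤ {i : F₂ | B i j ≠ 0}.ncard := by
          apply Set.ncard_le_ncard _ (Set.toFinite _)
          intro i hi
          simp only [Finset.coe_filter, Set.mem_setOf_eq, Finset.mem_univ, true_and] at hi
          have : a i ≠ 0 := hi ▸ hf2 i
          simpa [← hj, cols] using this
      _ ≤ d := hcol j
  have himg : (Finset.univ.image f).card ≤ s.toFinset.card := by
    apply Finset.card_le_card
    intro a ha
    obtain ⟨i₀, _, hfi₀⟩ := Finset.mem_image.mp ha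
    exact Set.mem_toFinset.mpr (hfi₀ ▸ hf1 i₀)
  calc Fintype.card F₂ = (Finset.univ : Finset F₂).card := rfl
    _ ≤ d * (Finset.univ.image f).card := hmain
    _ ≤ d * s.toFinset.card := Nat.mul_le_mul_left d himg
    _ = d * finrank K (span K (Set.range cols)) := by rw [hcard]

/-- Block rank bound (natural-number form): if the `F₁ × L₂` block of `A`
vanishes, then `rank A ≥ rank A[F₁,L₁] + dim(column span of A[F₂,L₂])`. -/
lemma block_rank_add_span_le
    {K : Type*} [Field K] {F₁ F₂ L₁ L₂ : Type*}
    [Fintype F₁] [Fintype F₂] [Fintype L₁] [Fintype L₂]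
    (A : Matrix (F₁ ⊕ F₂) (L₁ ⊕ L₂) K)
    (hzero : ∀ (i : F₁) (j : L₂), A (Sum.inl i) (Sum.inr j) = 0) :
    (A.submatrix (Sum.inl : F₁ → F₁ ⊕ F₂) (Sum.inl : L₁ → L₁ ⊕ L₂)).rank
      + finrank K (span K (Set.range fun j (i : F₂) => A (Sum.inr i) (Sum.inr j))) ≤ A.rank := by
  classical
  set π₁ : ((F₁ ⊕ F₂) → K) →ₗ[K] (F₁ → K) := LinearMap.funLeft K K Sum.inl with hπ₁
  set π₂ : ((F₁ ⊕ F₂) → K) →ₗ[K] (F₂ → K) := LinearMap.funLeft K K Sum.inr with hπ₂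
  set W : Submodule K ((F₁ ⊕ F₂) → K) := LinearMap.range A.mulVecLin with hW
  set A₁₁ := A.submatrix (Sum.inl : F₁ → F₁ ⊕ F₂) (Sum.inl : L₁ → L₁ ⊕ L₂) with hA₁₁
  -- rank-nullity on the restriction of π₁ to W
  have hrn : finrank K ↥(W.map π₁) + finrank K ↥(W ⊓ LinearMap.ker π₁) = finrank K W := by
    have h1 := LinearMap.finrank_range_add_finrank_ker (π₁.domRestrict W)
    rw [LinearMap.range_domRestrict] at h1
    have h2 : finrank K (LinearMap.ker (π₁.domRestrict W))
        = finrank K ↥(W ⊓ LinearMap.ker π₁) := by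
      rw [LinearMap.ker_domRestrict]
      have heq : Submodule.comap W.subtype (LinearMap.ker π₁)
          = Submodule.comap W.subtype (W ⊓ LinearMap.ker π₁) := by
        simp [Submodule.comap_inf]
      rw [heq]
      exact LinearEquiv.finrank_eq
        (Submodule.comapSubtypeEquivOfLe (inf_le_left : W ⊓ LinearMap.ker π₁ ≤ W))
    rw [h2] at h1
    exact h1
  -- the image block
  have hmap : W.map π₁ = LinearMap.range A₁₁.mulVecLin := by
    rw [hW, ← LinearMap.range_comp]
    have hcomp : π₁ ∘ₗ A.mulVecLin
        = A₁₁.mulVecLin ∘ₗ LinearMap.funLeft K K (Sum.inl : L₁ → L₁ ⊕ L₂) := by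
      apply LinearMap.ext
      intro x
      funext i
      simp only [LinearMap.comp_apply, hπ₁, LinearMap.funLeft_apply, Matrix.mulVecLin_apply,
        Matrix.mulVec, dotProduct, Function.comp]
      rw [Fintype.sum_sum_type]
      simp [hzero, hA₁₁]
    rw [hcomp, LinearMap.range_comp, LinearMap.range_eq_top.mpr
      (LinearMap.funLeft_surjective_of_injective K K _ Sum.inl_injective), Submodule.map_top]
  -- the kernel piece contains the span of the L₂ columns
  set colA : L₂ → ((F₁ ⊕ F₂) → K) := fun j i => A i (Sum.inr j) with hcolA
  set U : Submodule K ((F₁ ⊕ F₂) → K) := span K (Set.range colA) with hU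
  have hUle : U ≤ W ⊓ LinearMap.ker π₁ := by
    rw [hU, span_le]
    rintro _ ⟨j, rfl⟩
    constructor
    · refine ⟨Pi.single (Sum.inr j) 1, ?_⟩
      rw [Matrix.mulVecLin_apply, Matrix.mulVec_single_one]
      rfl
    · simp only [SetLike.mem_coe, LinearMap.mem_ker]
      funext i
      simp [hπ₁, hcolA, hzero]
  have hUmap : U.map π₂ = span K (Set.range fun j (i : F₂) => A (Sum.inr i) (Sum.inr j)) := by
    rw [hU, Submodule.map_span, ← Set.range_comp]
    rfl
  have hU' : finrank K (span K (Set.range fun j (i : F₂) => A (Sum.inr i) (Sum.inr j)))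
      ≤ finrank K ↥(W ⊓ LinearMap.ker π₁) := by
    rw [← hUmap]
    exact (Submodule.finrank_map_le π₂ U).trans (Submodule.finrank_mono hUle)
  have hA₁₁rank : A₁₁.rank = finrank K ↥(W.map π₁) := by rw [hmap]; rfl
  have : A.rank = finrank K W := rfl
  omega

/-- Block-structured rank lower bound used in the power counting: if the rows
of `A` split as `F₁ ⊔ F₂` and the columns as `L₁ ⊔ L₂` with `A[F₁, L₂] = 0`,
and in the block `A[F₂, L₂]` no row is zero while every column has at most
`d ≥ 1` nonzero entries, then `rank(A) ≥ rank(A[F₁, L₁]) + |F₂|/d`. -/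
theorem rank_ge_block_rank_add_card_div
    {K : Type*} [Field K] {F₁ F₂ L₁ L₂ : Type*}
    [Fintype F₁] [Fintype F₂] [Fintype L₁] [Fintype L₂]
    (d : ℕ) (hd : 1 ≤ d)
    (A : Matrix (F₁ ⊕ F₂) (L₁ ⊕ L₂) K)
    (hzero : ∀ (i : F₁) (j : L₂), A (Sum.inl i) (Sum.inr j) = 0)
    (hrow : ∀ i : F₂, (fun j : L₂ => A (Sum.inr i) (Sum.inr j)) ≠ 0)
    (hcol : ∀ j : L₂, {i : F₂ | A (Sum.inr i) (Sum.inr j) ≠ 0}.ncard ≤ d) :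
    ((A.submatrix (Sum.inl : F₁ → F₁ ⊕ F₂) (Sum.inl : L₁ → L₁ ⊕ L₂)).rank : ℚ)
        + (Fintype.card F₂ : ℚ) / (d : ℚ)
      ≤ (A.rank : ℚ) := by
  have h1 := block_rank_add_span_le A hzero
  have h2 := card_le_mul_finrank_span_cols d
    (fun (i : F₂) (j : L₂) => A (Sum.inr i) (Sum.inr j)) hrow hcol
  set n := finrank K (span K (Set.range fun j (i : F₂) => A (Sum.inr i) (Sum.inr j)))
  have hd0 : (0 : ℚ) < (d : ℚ) := by exact_mod_cast hd
  have hdiv : (Fintype.card F₂ : ℚ) / (d : ℚ) ≤ (n : ℚ) := by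
    rw [div_le_iff₀ hd0]
    have : Fintype.card F₂ ≤ n * d := by
      calc Fintype.card F₂ ≤ d * n := h2
        _ = n * d := Nat.mul_comm d n
    exact_mod_cast this
  have h1' : ((A.submatrix (Sum.inl : F₁ → F₁ ⊕ F₂) (Sum.inl : L₁ → L₁ ⊕ L₂)).rank : ℚ)
      + (n : ℚ) ≤ (A.rank : ℚ) := by exact_mod_cast h1
  linarith
end

section
/- Let n ≥ 1 be a natural number, m ≥ 0 a real number, and M > 1 a real number. Then there exist constants K > 0 and δ > 0 such that for every natural number i and every x ∈ ℝⁿ with |x_j| ≤ π for all j = 1, ..., n, one has |Σ_{q ∈ ℤⁿ} ∫_{M^{-2i}}^{M^{-2(i-1)}} e^{-α(‖q‖² + m²)} e^{i⟨q, x⟩} dα| ≤ K · M^{(n-2)·i} · e^{-δ · M^{-i} · ‖x‖}, where ‖·‖ denotes the Euclidean norm on ℝⁿ and ⟨q, x⟩ the Euclidean inner product. -/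
/-!
A Fourier mode `q` of the slice contributes at most `b · exp(-a‖q‖²)` with `a = s²`, `s = M^{-i}`,
`b = M² s²`. Since `t² ≥ |t| - 1`, the Gaussian `exp(-s² q²)` is dominated by `e · exp(-s|q|)`,
whose sum over `ℤ` is a two-sided geometric series of size `(2 + s)/s ≤ 3/s`. The lattice sum
therefore factorises and is `O(s^{-n})`, so the slice is `O(s^{2-n}) = O(M^{(n-2)i})`. On the
torus `‖x‖ ≤ π√n` and `s ≤ 1`, so the decay factor is at least `exp(-π√n)` and is absorbed into
the constant.
-/

open MeasureTheory Real

lemma HasSum.mul_of_nonneg {ι κ : Type*} {f : ι → ℝ} {g : κ → ℝ} {s t : ℝ}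
    (hf0 : ∀ i, 0 ≤ f i) (hg0 : ∀ k, 0 ≤ g k) (hf : HasSum f s) (hg : HasSum g t) :
    HasSum (fun p : ι × κ => f p.1 * g p.2) (s * t) :=
  hf.mul hg (hf.summable.mul_of_nonneg hg.summable hf0 hg0)

lemma hasSum_prod_fin_pi {κ : Type*} {u : κ → ℝ} {T : ℝ} (hu0 : ∀ k, 0 ≤ u k)
    (hu : HasSum u T) (n : ℕ) : HasSum (fun q : Fin n → κ => ∏ j, u (q j)) (T ^ n) := by
  induction n with
  | zero => simp
  | succ n ih =>
    have hprod := hu.mul_of_nonneg (g := fun q : Fin n → κ => ∏ j, u (q j)) hu0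
      (fun q => Finset.prod_nonneg fun j _ => hu0 (q j)) ih
    rw [pow_succ', ← (Fin.consEquiv fun _ => κ).hasSum_iff]
    convert hprod using 2 with p
    simp [Fin.consEquiv, Fin.prod_univ_succ]

lemma hasSum_exp_neg_mul_abs_int {s : ℝ} (hs : 0 < s) :
    HasSum (fun k : ℤ => rexp (-s * |(k : ℝ)|)) ((1 + rexp (-s)) / (1 - rexp (-s))) := by
  set r := rexp (-s)
  have hr0 : 0 ≤ r := (exp_pos _).le
  have hr1 : r < 1 := exp_lt_one_iff.mpr (by linarith)
  have hpow : ∀ k : ℕ, rexp (-s * k) = r ^ k := fun k => by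
    rw [← exp_nat_mul]; ring_nf
  have hnat : HasSum (fun k : ℕ => rexp (-s * |((k : ℤ) : ℝ)|)) (1 - r)⁻¹ := by
    simpa only [Int.cast_natCast, Nat.abs_cast, hpow] using hasSum_geometric_of_lt_one hr0 hr1
  have hneg : HasSum (fun k : ℕ => rexp (-s * |((-(k + 1) : ℤ) : ℝ)|)) (r * (1 - r)⁻¹) := by
    have h : ∀ k : ℕ, rexp (-s * |((-(k + 1) : ℤ) : ℝ)|) = r * r ^ k := fun k => by
      rw [← pow_succ', ← hpow]
      push_cast
      rw [abs_of_nonpos (by linarith)]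
      ring_nf
    simpa only [h] using (hasSum_geometric_of_lt_one hr0 hr1).mul_left r
  have hsum : (1 + r) / (1 - r) = (1 - r)⁻¹ + r * (1 - r)⁻¹ := by
    field_simp
  rw [hsum]
  exact HasSum.of_nat_of_neg_add_one (f := fun k : ℤ => rexp (-s * |(k : ℝ)|)) hnat hneg

lemma one_add_exp_neg_div_one_sub_exp_neg_le {s : ℝ} (hs : 0 < s) :
    (1 + rexp (-s)) / (1 - rexp (-s)) ≤ (2 + s) / s := by
  have hr : rexp (-s) * (1 + s) ≤ 1 := by
    rw [exp_neg]; exact inv_mul_le_one_of_le₀ (by linarith [add_one_le_exp s]) (exp_pos s).le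
  have hr1 : rexp (-s) < 1 := exp_lt_one_iff.mpr (by linarith)
  rw [div_le_div_iff₀ (by linarith) hs]
  nlinarith

lemma exp_neg_sq_le_exp_one_mul_exp_neg_abs (t : ℝ) : rexp (-t ^ 2) ≤ rexp 1 * rexp (-|t|) := by
  rw [← exp_add, exp_le_exp, ← sq_abs]
  nlinarith [sq_nonneg (|t| - 1)]

lemma exp_neg_sq_mul_sum_sq_le {ι : Type*} [Fintype ι] {s : ℝ} (hs : 0 ≤ s) (q : ι → ℝ) :
    rexp (-(s ^ 2 * ∑ j, q j ^ 2)) ≤ rexp 1 ^ Fintype.card ι * ∏ j, rexp (-s * |q j|) := by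
  have h : ∀ j, rexp (-(s * q j) ^ 2) ≤ rexp 1 * rexp (-s * |q j|) := fun j => by
    simpa [abs_mul, abs_of_nonneg hs] using exp_neg_sq_le_exp_one_mul_exp_neg_abs (s * q j)
  calc rexp (-(s ^ 2 * ∑ j, q j ^ 2)) = ∏ j, rexp (-(s * q j) ^ 2) := by
        rw [← exp_sum, Finset.mul_sum, ← Finset.sum_neg_distrib]; simp only [mul_pow]
    _ ≤ ∏ j, (rexp 1 * rexp (-s * |q j|)) :=
        Finset.prod_le_prod (fun j _ => (exp_pos _).le) fun j _ => h j
    _ = _ := by rw [Finset.prod_mul_distrib, Finset.prod_const, Finset.card_univ]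

lemma norm_integral_Icc_exp_mul_exp_I_le {a b μ : ℝ} (hab : a ≤ b) (hμ : 0 ≤ μ) (θ : ℝ) :
    ‖∫ α in Set.Icc a b, Complex.exp (-(α : ℂ) * μ) * Complex.exp (Complex.I * θ)‖
      ≤ (b - a) * rexp (-(a * μ)) := by
  have hvol : volume.real (Set.Icc a b) = b - a := by
    rw [Real.volume_real_Icc, max_eq_left (by linarith)]
  rw [← hvol, mul_comm (volume.real _)]
  refine norm_setIntegral_le_of_norm_le_const measure_Icc_lt_top fun α hα => ?_
  rw [norm_mul, mul_comm Complex.I, Complex.norm_exp_ofReal_mul_I, mul_one, ← Complex.ofReal_neg,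
    ← Complex.ofReal_mul, Complex.norm_exp_ofReal, exp_le_exp]
  nlinarith [hα.1]

lemma sqrt_sum_sq_le_of_abs_le {ι : Type*} [Fintype ι] {x : ι → ℝ} {c : ℝ} (hc : 0 ≤ c)
    (hx : ∀ j, |x j| ≤ c) : √(∑ j, x j ^ 2) ≤ c * √(Fintype.card ι) := by
  rw [← sqrt_sq hc, ← sqrt_mul (sq_nonneg c)]
  refine sqrt_le_sqrt ?_
  calc ∑ j, x j ^ 2 ≤ ∑ _j : ι, c ^ 2 := Finset.sum_le_sum fun j _ => by
        rw [← sq_abs]; exact pow_le_pow_left₀ (abs_nonneg _) (hx j) 2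
    _ = c ^ 2 * Fintype.card ι := by simp [mul_comm]

lemma zpow_neg_sq_mul_div_pow {M : ℝ} (hM : 0 < M) (i n : ℕ) (c : ℝ) :
    (M ^ (-(i : ℤ))) ^ 2 * (c / M ^ (-(i : ℤ))) ^ n = c ^ n * M ^ (((n : ℤ) - 2) * (i : ℤ)) := by
  have hs := (zpow_pos hM (-(i : ℤ))).ne'
  calc (M ^ (-(i : ℤ))) ^ 2 * (c / M ^ (-(i : ℤ))) ^ n
      = c ^ n * (M ^ (-(i : ℤ))) ^ ((2 : ℤ) - n) := by
        rw [zpow_sub₀ hs, zpow_ofNat, zpow_natCast, div_pow]; ring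
    _ = c ^ n * M ^ (((n : ℤ) - 2) * (i : ℤ)) := by
        rw [← zpow_mul]; ring_nf

noncomputable def propagatorMode (n : ℕ) (m a b : ℝ) (x : Fin n → ℝ) (q : Fin n → ℤ) : ℂ :=
  ∫ α in Set.Icc a b,
    Complex.exp (-(α : ℂ) * ((∑ j, ((q j : ℂ)) ^ 2) + (m : ℂ) ^ 2))
      * Complex.exp (Complex.I * (∑ j, (q j : ℂ) * (x j : ℂ)))

noncomputable def propagatorSlice (n : ℕ) (m a b : ℝ) (x : Fin n → ℝ) : ℂ :=
  ∑' q : Fin n → ℤ, propagatorMode n m a b x q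

lemma norm_propagatorMode_le {n : ℕ} (m : ℝ) {s b : ℝ} (hs : 0 ≤ s) (hb : s ^ 2 ≤ b)
    (x : Fin n → ℝ) (q : Fin n → ℤ) :
    ‖propagatorMode n m (s ^ 2) b x q‖ ≤ b * rexp 1 ^ n * ∏ j, rexp (-s * |((q j : ℤ) : ℝ)|) := by
  set Q := ∑ j, ((q j : ℤ) : ℝ) ^ 2
  have hμ : (∑ j, ((q j : ℂ)) ^ 2) + (m : ℂ) ^ 2 = ((Q + m ^ 2 : ℝ) : ℂ) := by
    push_cast [Q]; rfl
  have hθ : ∑ j, (q j : ℂ) * (x j : ℂ) = ((∑ j, (q j : ℝ) * x j : ℝ) : ℂ) := by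
    push_cast; rfl
  rw [propagatorMode, hμ, hθ]
  calc _ ≤ (b - s ^ 2) * rexp (-(s ^ 2 * (Q + m ^ 2))) :=
        norm_integral_Icc_exp_mul_exp_I_le hb (by positivity) _
    _ ≤ b * rexp (-(s ^ 2 * Q)) := by
        gcongr <;> nlinarith [sq_nonneg m, sq_nonneg s]
    _ ≤ b * (rexp 1 ^ n * ∏ j, rexp (-s * |((q j : ℤ) : ℝ)|)) := by
        gcongr
        · nlinarith
        · simpa using exp_neg_sq_mul_sum_sq_le hs (fun j => ((q j : ℤ) : ℝ))
    _ = _ := by ring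

lemma norm_propagatorSlice_le {n : ℕ} (m : ℝ) {s b : ℝ} (hs : 0 < s) (hb : s ^ 2 ≤ b)
    (x : Fin n → ℝ) :
    ‖propagatorSlice n m (s ^ 2) b x‖ ≤ b * rexp 1 ^ n * ((2 + s) / s) ^ n := by
  have hu := hasSum_exp_neg_mul_abs_int hs
  have hlattice := hasSum_prod_fin_pi (fun k => (exp_pos _).le) hu n
  calc _ ≤ b * rexp 1 ^ n * ((1 + rexp (-s)) / (1 - rexp (-s))) ^ n :=
        tsum_of_norm_bounded (hlattice.mul_left _) (norm_propagatorMode_le m hs.le hb x)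
    _ ≤ _ := by
        have hb0 : 0 ≤ b := le_trans (sq_nonneg s) hb
        gcongr b * rexp 1 ^ n * ?_ ^ n
        · exact hu.nonneg fun k => (exp_pos _).le
        · exact one_add_exp_neg_div_one_sub_exp_neg_le hs

theorem sliced_propagator_bound_general
    (n : ℕ) (m : ℝ) (M : ℝ) (hM : 1 < M) :
    ∃ K > (0 : ℝ), ∃ δ > (0 : ℝ), ∀ (i : ℕ) (x : Fin n → ℝ),
      (∀ j : Fin n, |x j| ≤ Real.pi) →
      ‖∑' q : Fin n → ℤ,
          ∫ α in Set.Icc (M ^ (-(2 * (i : ℤ)))) (M ^ (-(2 * ((i : ℤ) - 1)))),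
            Complex.exp (-(α : ℂ) * ((∑ j, ((q j : ℂ)) ^ 2) + (m : ℂ) ^ 2))
              * Complex.exp (Complex.I * (∑ j, (q j : ℂ) * (x j : ℂ)))‖
        ≤ K * M ^ (((n : ℤ) - 2) * (i : ℤ))
            * Real.exp (-δ * M ^ (-(i : ℤ)) * Real.sqrt (∑ j, (x j) ^ 2)) := by
  have hM0 : 0 < M := one_pos.trans hM
  refine ⟨M ^ 2 * (3 * rexp 1) ^ n * rexp (π * √n), by positivity, 1, one_pos, fun i x hx => ?_⟩
  set s := M ^ (-(i : ℤ))
  have hs0 : 0 < s := zpow_pos hM0 _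
  have hs1 : s ≤ 1 := zpow_le_one_of_nonpos₀ hM.le (by simp)
  have ha : M ^ (-(2 * (i : ℤ))) = s ^ 2 := by
    rw [← zpow_natCast, ← zpow_mul]; ring_nf
  have hb : M ^ (-(2 * ((i : ℤ) - 1))) = M ^ 2 * s ^ 2 := by
    rw [← ha, ← zpow_natCast, ← zpow_add₀ hM0.ne']; ring_nf
  have hdecay : rexp (-(π * √n)) ≤ rexp (-1 * s * √(∑ j, x j ^ 2)) := by
    have hx' := sqrt_sum_sq_le_of_abs_le pi_pos.le hx
    rw [Fintype.card_fin] at hx'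
    rw [exp_le_exp]
    nlinarith [sqrt_nonneg (∑ j, x j ^ 2)]
  change ‖propagatorSlice n m _ _ x‖ ≤ _
  rw [ha, hb]
  calc _ ≤ M ^ 2 * s ^ 2 * rexp 1 ^ n * ((2 + s) / s) ^ n :=
        norm_propagatorSlice_le m hs0 (le_mul_of_one_le_left (sq_nonneg s) (one_le_pow₀ hM.le)) x
    _ = M ^ 2 * rexp 1 ^ n * (s ^ 2 * ((2 + s) / s) ^ n) := by ring
    _ ≤ M ^ 2 * rexp 1 ^ n * (s ^ 2 * (3 / s) ^ n) := by gcongr; linarith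
    _ = M ^ 2 * (3 * rexp 1) ^ n * rexp (π * √n) * M ^ (((n : ℤ) - 2) * (i : ℤ))
          * rexp (-(π * √n)) := by
        rw [zpow_neg_sq_mul_div_pow hM0, mul_pow, exp_neg]; field_simp
    _ ≤ _ := by gcongr

/-- Sliced propagator bound for the Laplacian kinetic term on `U(1)^n`: the
slice `C^i` of the Schwinger representation of the propagator, restricted to
Schwinger parameters `α ∈ [M^{-2i}, M^{-2(i-1)}]`, is bounded by
`K · M^{(n-2)i} · exp(−δ · M^{-i} · ‖x‖)` uniformly in the scale `i` and in
the angle difference `x` with `|x_j| ≤ π`. -/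
theorem sliced_propagator_bound
    (n : ℕ) (hn : 1 ≤ n) (m : ℝ) (hm : 0 ≤ m) (M : ℝ) (hM : 1 < M) :
    ∃ K > (0 : ℝ), ∃ δ > (0 : ℝ), ∀ (i : ℕ) (x : Fin n → ℝ),
      (∀ j : Fin n, |x j| ≤ Real.pi) →
      ‖∑' q : Fin n → ℤ,
          ∫ α in Set.Icc (M ^ (-(2 * (i : ℤ)))) (M ^ (-(2 * ((i : ℤ) - 1)))),
            Complex.exp (-(α : ℂ) * ((∑ j, ((q j : ℂ)) ^ 2) + (m : ℂ) ^ 2))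
              * Complex.exp (Complex.I * (∑ j, (q j : ℂ) * (x j : ℂ)))‖
        ≤ K * M ^ (((n : ℤ) - 2) * (i : ℤ))
            * Real.exp (-δ * M ^ (-(i : ℤ)) * Real.sqrt (∑ j, (x j) ^ 2)) :=
  sliced_propagator_bound_general n m M hM
end
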